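/- Let H, K be Hopf algebras, C a (K,H)-bi-Galois co-object with Morita maps ∧ : C̄ ⊗_K C → H and ∨ : C ⊗_H C̄ → K. Let (H,K,A,C) be a Yetter-Drinfeld datum. If the canonical map can̄ : C ⊗ H → C ⊗ C, c ⊗ h ↦ c_{(1)} ⊗ (c_{(2)} ◁ h), is bijective, then for every M ∈ _A YD^C(H,K) and every left H-module V, the half-braid β_{V,M} : V ⊗ M → M ⊗ (C ⊗_H V), v ⊗ m ↦ m_{[0]} ⊗ m_{[1]} ⊗_H v, is invertible, with inverse m ⊗ c ⊗_H v ↦ (m_{[1]} ∧ c)·v ⊗ m_{[0]}. -/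

import Mathlib

/-!
The inverse `m ⊗ (c ⊗ v) ↦ (m₍₁₎ ∧ c) · v ⊗ m₍₀₎` descends to `C ⊗_H V` because `∧` is right
`H`-linear in its second argument. Composing with `β` one way gives
`(m₍₁₎ ∧ m₍₂₎) · v ⊗ m₍₀₎ = v ⊗ m`. The other way gives
`m₍₀₎ ⊗ m₍₁₎ ◁ (m₍₂₎ ∧ c) ⊗_H v = m₍₀₎ ⊗ (m₍₁₎ ∨ m₍₂₎) ▷ c ⊗_H v = m ⊗ 1 ▷ c ⊗_H v`, and the
last step, `1 ▷ c ⊗_H v = c ⊗_H v`, uses the Morita identities once more.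
-/

open TensorProduct Coalgebra

variable {k : Type} [CommRing k]

/-- The `H`-balancing submodule of `C ⊗ₖ V`, whose quotient is `C ⊗_H V`. -/
def balancer (H : Type) [Ring H] [Algebra k H]
    (C : Type) [AddCommGroup C] [Module k C] (actR : C ⊗[k] H →ₗ[k] C)
    (V : Type) [AddCommGroup V] [Module k V] [Module H V] [IsScalarTower k H V] :
    Submodule k (C ⊗[k] V) :=
  Submodule.span k {x | ∃ (c : C) (h : H) (v : V), x = actR (c ⊗ₜ h) ⊗ₜ v - c ⊗ₜ (h • v)}

/-- The half-braid `β_{V,M} : V ⊗ M → M ⊗ (C ⊗ V)` at the level of `k`-modules. -/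
noncomputable def betaRaw {C M : Type} [AddCommGroup C] [Module k C] [AddCommGroup M] [Module k M]
    (ρ : M →ₗ[k] M ⊗[k] C)
    (V : Type) [AddCommGroup V] [Module k V] :
    V ⊗[k] M →ₗ[k] M ⊗[k] (C ⊗[k] V) :=
  (TensorProduct.assoc k M C V).toLinearMap ∘ₗ (LinearMap.rTensor V ρ) ∘ₗ
    (TensorProduct.comm k V M).toLinearMap

/-- The action of `H` on a left `H`-module as a `k`-linear map `H ⊗ₖ V → V`. -/
noncomputable def hAct (H : Type) [Ring H] [Algebra k H]
    (V : Type) [AddCommGroup V] [Module k V] [Module H V] [IsScalarTower k H V]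
    [SMulCommClass k H V] : H ⊗[k] V →ₗ[k] V :=
  TensorProduct.lift (LinearMap.mk₂ k (fun h v => h • v)
    (fun h h' v => add_smul h h' v) (fun c h v => smul_assoc c h v)
    (fun h v v' => smul_add h v v') (fun c h v => (smul_comm c h v).symm))


theorem betaRaw_tmul {C M V : Type} [AddCommGroup C] [Module k C] [AddCommGroup M] [Module k M]
    [AddCommGroup V] [Module k V] (ρ : M →ₗ[k] M ⊗[k] C) (v : V) (m : M) :
    betaRaw ρ V (v ⊗ₜ m) = TensorProduct.assoc k M C V (ρ m ⊗ₜ v) :=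
  rfl

/-- The map `m ⊗ (c ⊗ v) ↦ (m₍₁₎ ∧ c) · v ⊗ m₍₀₎`, before passing to `C ⊗_H V`. -/
noncomputable def halfBraidInvRaw {H C M : Type} [Ring H] [Algebra k H] [AddCommGroup C]
    [Module k C] [AddCommGroup M] [Module k M] (ρ : M →ₗ[k] M ⊗[k] C) (wedge : C ⊗[k] C →ₗ[k] H)
    (V : Type) [AddCommGroup V] [Module k V] [Module H V] [IsScalarTower k H V]
    [SMulCommClass k H V] :
    M ⊗[k] (C ⊗[k] V) →ₗ[k] V ⊗[k] M :=
  (TensorProduct.comm k M V).toLinearMap ∘ₗ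
    (LinearMap.lTensor M (hAct H V)) ∘ₗ
    (LinearMap.lTensor M (LinearMap.rTensor V wedge)) ∘ₗ
    (LinearMap.lTensor M (TensorProduct.assoc k C C V).symm.toLinearMap) ∘ₗ
    (TensorProduct.assoc k M C (C ⊗[k] V)).toLinearMap ∘ₗ
    (LinearMap.rTensor (C ⊗[k] V) ρ)

theorem balancer_mkQ_actR_tmul {H C V : Type} [Ring H] [Algebra k H] [AddCommGroup C] [Module k C]
    [AddCommGroup V] [Module k V] [Module H V] [IsScalarTower k H V]
    (actR : C ⊗[k] H →ₗ[k] C) (c : C) (h : H) (v : V) :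
    (balancer H C actR V).mkQ (actR (c ⊗ₜ h) ⊗ₜ v) = (balancer H C actR V).mkQ (c ⊗ₜ[k] (h • v)) := by
  rw [← sub_eq_zero, ← map_sub, Submodule.mkQ_apply, Submodule.Quotient.mk_eq_zero]
  exact Submodule.subset_span ⟨c, h, v, rfl⟩

theorem exists_comp_lTensor_mkQ_eq {M X Y : Type} [AddCommGroup M] [Module k M]
    [AddCommGroup X] [Module k X] [AddCommGroup Y] [Module k Y]
    (N : Submodule k X) (g : M ⊗[k] X →ₗ[k] Y) (hg : ∀ x ∈ N, ∀ m : M, g (m ⊗ₜ x) = 0) :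
    ∃ g' : M ⊗[k] (X ⧸ N) →ₗ[k] Y, g' ∘ₗ LinearMap.lTensor M N.mkQ = g :=
  ⟨lift (N.liftQ (curry g).flip fun x hx => LinearMap.ext (hg x hx)).flip, by ext; rfl⟩

theorem lTensor_assoc_tmul {M C D X : Type} [AddCommGroup M] [Module k M] [AddCommGroup C]
    [Module k C] [AddCommGroup D] [Module k D] [AddCommGroup X] [Module k X]
    (f : C ⊗[k] D →ₗ[k] X) (s : M ⊗[k] C) (d : D) :
    LinearMap.lTensor M f (TensorProduct.assoc k M C D (s ⊗ₜ d))
      = LinearMap.lTensor M (f ∘ₗ (TensorProduct.mk k C D).flip d) s := by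
  induction s with
  | zero => simp
  | add a b ha hb => simp only [add_tmul, map_add, ha, hb]
  | tmul m c => rfl

section Comodule

variable {C M X : Type} [AddCommGroup C] [Module k C] [Coalgebra k C]
  [AddCommGroup M] [Module k M] [AddCommGroup X] [Module k X] {ρ : M →ₗ[k] M ⊗[k] C}

theorem comodule_lTensor_assoc_rTensor
    (hρcoassoc : (TensorProduct.assoc k M C C).toLinearMap ∘ₗ
      (LinearMap.rTensor C ρ) ∘ₗ ρ = (LinearMap.lTensor M (comul (R := k) (A := C))) ∘ₗ ρ)
    (φ : C ⊗[k] C →ₗ[k] X) (m : M) :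
    LinearMap.lTensor M φ (TensorProduct.assoc k M C C (LinearMap.rTensor C ρ (ρ m)))
      = LinearMap.lTensor M (φ ∘ₗ comul) (ρ m) := by
  rw [LinearMap.lTensor_comp_apply]
  exact congrArg _ (LinearMap.congr_fun hρcoassoc m)

theorem comodule_lTensor_counit
    (hρcounit : (TensorProduct.rid k M).toLinearMap ∘ₗ
      (LinearMap.lTensor M (counit (R := k) (A := C))) ∘ₗ ρ = LinearMap.id)
    (x : X) (m : M) :
    LinearMap.lTensor M (LinearMap.toSpanSingleton k X x ∘ₗ counit) (ρ m) = m ⊗ₜ x := by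
  have key : ∀ t : M ⊗[k] C, LinearMap.lTensor M (LinearMap.toSpanSingleton k X x ∘ₗ counit) t
      = TensorProduct.rid k M (LinearMap.lTensor M counit t) ⊗ₜ x := by
    intro t
    induction t with
    | zero => simp
    | add a b ha hb => simp only [map_add, ha, hb, add_tmul]
    | tmul m c => simp [smul_tmul]
  rw [key]
  exact congrArg (· ⊗ₜ x) (LinearMap.congr_fun hρcounit m)

end Comodule

section HalfBraid

variable {H K C M V : Type} [Ring H] [Algebra k H] [Ring K] [Algebra k K]
  [AddCommGroup C] [Module k C] [AddCommGroup M] [Module k M]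
  [AddCommGroup V] [Module k V] [Module H V] [IsScalarTower k H V]
  {actL : K ⊗[k] C →ₗ[k] C} {actR : C ⊗[k] H →ₗ[k] C}
  {wedge : C ⊗[k] C →ₗ[k] H} {vee : C ⊗[k] C →ₗ[k] K} {ρ : M →ₗ[k] M ⊗[k] C}

theorem halfBraidInvRaw_tmul_tmul [SMulCommClass k H V] (m : M) (c : C) (v : V) :
    halfBraidInvRaw ρ wedge V (m ⊗ₜ (c ⊗ₜ v)) = TensorProduct.comm k M V
      (LinearMap.lTensor M ((wedge ∘ₗ (TensorProduct.mk k C C).flip c).smulRight v) (ρ m)) := by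
  simp only [halfBraidInvRaw, LinearMap.comp_apply, LinearMap.rTensor_tmul, LinearEquiv.coe_coe]
  induction ρ m with
  | zero => simp
  | add a b ha hb => simp only [add_tmul, map_add, ha, hb]
  | tmul m' c' => rfl

theorem halfBraidInvRaw_eq_zero_of_mem_balancer [SMulCommClass k H V]
    (hwedgeH : ∀ (c d : C) (h : H), wedge (c ⊗ₜ actR (d ⊗ₜ h)) = wedge (c ⊗ₜ d) * h)
    (m : M) {x : C ⊗[k] V} (hx : x ∈ balancer H C actR V) :
    halfBraidInvRaw ρ wedge V (m ⊗ₜ x) = 0 := by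
  induction hx using Submodule.span_induction with
  | mem x hx =>
    obtain ⟨c, h, v, rfl⟩ := hx
    have hψ : (wedge ∘ₗ (TensorProduct.mk k C C).flip (actR (c ⊗ₜ h))).smulRight v
        = (wedge ∘ₗ (TensorProduct.mk k C C).flip c).smulRight (h • v) := by
      ext c'
      simp [hwedgeH, mul_smul]
    rw [tmul_sub, map_sub, halfBraidInvRaw_tmul_tmul, halfBraidInvRaw_tmul_tmul, hψ, sub_self]
  | zero => simp
  | add x y _ _ hx hy => rw [tmul_add, map_add, hx, hy, add_zero]
  | smul a x _ hx => rw [tmul_smul, map_smul, hx, smul_zero]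

variable [Coalgebra k C]

theorem smulRight_comp_comul
    (hwedge_counit : wedge ∘ₗ comul (R := k) (A := C)
      = (Algebra.linearMap k H) ∘ₗ counit (R := k) (A := C)) (v : V) :
    wedge.smulRight v ∘ₗ comul = LinearMap.toSpanSingleton k V v ∘ₗ counit := by
  ext c
  simp [← LinearMap.comp_apply wedge, hwedge_counit]

/-- The unit of `K` acts trivially on `C ⊗_H V`, although `actL` is not assumed unital:
`1 ▷ c = (c₁ ∨ c₂) ▷ c₃ = c₁ ◁ (c₂ ∧ c₃)`, which is balanced against `(c₂ ∧ c₃) · v = ε(c₂) v`. -/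
theorem balancer_mkQ_actL_one_tmul
    (hwedge_counit : wedge ∘ₗ comul (R := k) (A := C)
      = (Algebra.linearMap k H) ∘ₗ counit (R := k) (A := C))
    (hvee_counit : vee ∘ₗ comul (R := k) (A := C)
      = (Algebra.linearMap k K) ∘ₗ counit (R := k) (A := C))
    (hwedgevee : ∀ c d e : C, actR (c ⊗ₜ wedge (d ⊗ₜ e)) = actL (vee (c ⊗ₜ d) ⊗ₜ e))
    (c : C) (v : V) :
    (balancer H C actR V).mkQ (actL (1 ⊗ₜ c) ⊗ₜ v) = (balancer H C actR V).mkQ (c ⊗ₜ v) := by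
  set N := balancer H C actR V
  set F : C ⊗[k] (C ⊗[k] C) →ₗ[k] (C ⊗[k] V) ⧸ N :=
    N.mkQ ∘ₗ (TensorProduct.mk k C V).flip v ∘ₗ actR ∘ₗ LinearMap.lTensor C wedge
  have hF_balanced : F = N.mkQ ∘ₗ LinearMap.lTensor C (wedge.smulRight v) := by
    ext a b d
    exact balancer_mkQ_actR_tmul actR a _ v
  have hF_assoc : F ∘ₗ (TensorProduct.assoc k C C C).toLinearMap
      = N.mkQ ∘ₗ (TensorProduct.mk k C V).flip v ∘ₗ actL ∘ₗ LinearMap.rTensor C vee := by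
    ext a b d
    exact congrArg (fun x => N.mkQ (x ⊗ₜ v)) (hwedgevee a b d)
  calc N.mkQ (actL (1 ⊗ₜ c) ⊗ₜ v)
      = F (TensorProduct.assoc k C C C (LinearMap.rTensor C comul (comul c))) := by
        refine Eq.trans ?_ (LinearMap.congr_fun hF_assoc _).symm
        rw [LinearMap.comp_apply, LinearMap.comp_apply, LinearMap.comp_apply,
          ← LinearMap.rTensor_comp_apply, hvee_counit, LinearMap.rTensor_comp_apply,
          Coalgebra.rTensor_counit_comul]
        simp
    _ = F (LinearMap.lTensor C comul (comul c)) := by rw [Coalgebra.coassoc_apply]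
    _ = N.mkQ (c ⊗ₜ v) := by
        rw [hF_balanced, LinearMap.comp_apply, ← LinearMap.lTensor_comp_apply,
          smulRight_comp_comul hwedge_counit, LinearMap.lTensor_comp_apply,
          Coalgebra.lTensor_counit_comul]
        simp

theorem balancer_mkQ_comp_lTensor_smulRight_comp_comul
    (hwedge_counit : wedge ∘ₗ comul (R := k) (A := C)
      = (Algebra.linearMap k H) ∘ₗ counit (R := k) (A := C))
    (hvee_counit : vee ∘ₗ comul (R := k) (A := C)
      = (Algebra.linearMap k K) ∘ₗ counit (R := k) (A := C))
    (hwedgevee : ∀ c d e : C, actR (c ⊗ₜ wedge (d ⊗ₜ e)) = actL (vee (c ⊗ₜ d) ⊗ₜ e))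
    (c : C) (v : V) :
    (balancer H C actR V).mkQ ∘ₗ
        LinearMap.lTensor C ((wedge ∘ₗ (TensorProduct.mk k C C).flip c).smulRight v) ∘ₗ comul
      = LinearMap.toSpanSingleton k _ ((balancer H C actR V).mkQ (c ⊗ₜ v)) ∘ₗ counit := by
  set N := balancer H C actR V
  have h_balanced : N.mkQ ∘ₗ
        LinearMap.lTensor C ((wedge ∘ₗ (TensorProduct.mk k C C).flip c).smulRight v)
      = N.mkQ ∘ₗ (TensorProduct.mk k C V).flip v ∘ₗ actL ∘ₗ (TensorProduct.mk k K C).flip c ∘ₗ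
          vee := by
    refine TensorProduct.ext' fun a b => ?_
    show N.mkQ (a ⊗ₜ (wedge (b ⊗ₜ c) • v)) = N.mkQ (actL (vee (a ⊗ₜ b) ⊗ₜ c) ⊗ₜ v)
    rw [← hwedgevee, balancer_mkQ_actR_tmul]
  ext d
  rw [← LinearMap.comp_assoc, h_balanced]
  simp only [LinearMap.comp_apply]
  rw [← LinearMap.comp_apply (f := vee), hvee_counit,
    ← balancer_mkQ_actL_one_tmul hwedge_counit hvee_counit hwedgevee c v]
  simp [Algebra.algebraMap_eq_smul_one]

theorem halfBraidInvRaw_comp_betaRaw [SMulCommClass k H V]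
    (hwedge_counit : wedge ∘ₗ comul (R := k) (A := C)
      = (Algebra.linearMap k H) ∘ₗ counit (R := k) (A := C))
    (hρcoassoc : (TensorProduct.assoc k M C C).toLinearMap ∘ₗ
      (LinearMap.rTensor C ρ) ∘ₗ ρ = (LinearMap.lTensor M (comul (R := k) (A := C))) ∘ₗ ρ)
    (hρcounit : (TensorProduct.rid k M).toLinearMap ∘ₗ
      (LinearMap.lTensor M (counit (R := k) (A := C))) ∘ₗ ρ = LinearMap.id) :
    halfBraidInvRaw ρ wedge V ∘ₗ betaRaw ρ V = LinearMap.id := by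
  refine TensorProduct.ext' fun v m => ?_
  have h_assoc : ∀ t : M ⊗[k] C,
      halfBraidInvRaw ρ wedge V (TensorProduct.assoc k M C V (t ⊗ₜ v)) = TensorProduct.comm k M V
        (LinearMap.lTensor M (wedge.smulRight v)
          (TensorProduct.assoc k M C C (LinearMap.rTensor C ρ t))) := by
    intro t
    induction t with
    | zero => simp
    | add a b ha hb => simp only [add_tmul, map_add, ha, hb]
    | tmul m' c' =>
      rw [TensorProduct.assoc_tmul, halfBraidInvRaw_tmul_tmul, LinearMap.rTensor_tmul,
        lTensor_assoc_tmul]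
      rfl
  rw [LinearMap.comp_apply, betaRaw_tmul, h_assoc, comodule_lTensor_assoc_rTensor hρcoassoc,
    smulRight_comp_comul hwedge_counit, comodule_lTensor_counit hρcounit]
  rfl

theorem lTensor_mkQ_comp_betaRaw_comp_halfBraidInvRaw [SMulCommClass k H V]
    (hwedge_counit : wedge ∘ₗ comul (R := k) (A := C)
      = (Algebra.linearMap k H) ∘ₗ counit (R := k) (A := C))
    (hvee_counit : vee ∘ₗ comul (R := k) (A := C)
      = (Algebra.linearMap k K) ∘ₗ counit (R := k) (A := C))
    (hwedgevee : ∀ c d e : C, actR (c ⊗ₜ wedge (d ⊗ₜ e)) = actL (vee (c ⊗ₜ d) ⊗ₜ e))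
    (hρcoassoc : (TensorProduct.assoc k M C C).toLinearMap ∘ₗ
      (LinearMap.rTensor C ρ) ∘ₗ ρ = (LinearMap.lTensor M (comul (R := k) (A := C))) ∘ₗ ρ)
    (hρcounit : (TensorProduct.rid k M).toLinearMap ∘ₗ
      (LinearMap.lTensor M (counit (R := k) (A := C))) ∘ₗ ρ = LinearMap.id) :
    LinearMap.lTensor M (balancer H C actR V).mkQ ∘ₗ betaRaw ρ V ∘ₗ halfBraidInvRaw ρ wedge V
      = LinearMap.lTensor M (balancer H C actR V).mkQ := by
  set N := balancer H C actR V
  refine TensorProduct.ext' fun m x => ?_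
  induction x with
  | zero => simp
  | add a b ha hb => rw [tmul_add, map_add, map_add, ha, hb]
  | tmul c v =>
    set ψ := (wedge ∘ₗ (TensorProduct.mk k C C).flip c).smulRight v
    have h_assoc : ∀ t : M ⊗[k] C,
        LinearMap.lTensor M N.mkQ (betaRaw ρ V (TensorProduct.comm k M V (LinearMap.lTensor M ψ t)))
          = LinearMap.lTensor M (N.mkQ ∘ₗ LinearMap.lTensor C ψ)
              (TensorProduct.assoc k M C C (LinearMap.rTensor C ρ t)) := by
      intro t
      induction t with
      | zero => simp
      | add a b ha hb => simp only [map_add, ha, hb]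
      | tmul m' c' =>
        rw [LinearMap.lTensor_tmul, TensorProduct.comm_tmul, betaRaw_tmul, lTensor_assoc_tmul,
          LinearMap.rTensor_tmul, lTensor_assoc_tmul]
        rfl
    rw [LinearMap.comp_apply, LinearMap.comp_apply, halfBraidInvRaw_tmul_tmul, h_assoc,
      comodule_lTensor_assoc_rTensor hρcoassoc, LinearMap.comp_assoc,
      balancer_mkQ_comp_lTensor_smulRight_comp_comul hwedge_counit hvee_counit hwedgevee,
      comodule_lTensor_counit hρcounit]
    rfl

end HalfBraid

theorem genYD_halfBraid_invertible
    {H : Type} [Ring H] [HopfAlgebra k H]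
    {K : Type} [Ring K] [HopfAlgebra k K]
    {A : Type}
    {C : Type} [AddCommGroup C] [Module k C] [Coalgebra k C]
    {M : Type} [AddCommGroup M] [Module k M]
    (actL : K ⊗[k] C →ₗ[k] C) (actR : C ⊗[k] H →ₗ[k] C)
    (ρ : M →ₗ[k] M ⊗[k] C)
    -- the Morita maps `∧` and `∨` of the bi-Galois co-object `C` and their identities
    (wedge : C ⊗[k] C →ₗ[k] H) (vee : C ⊗[k] C →ₗ[k] K)
    (hwedge_counit : wedge ∘ₗ comul (R := k) (A := C)
        = (Algebra.linearMap k H) ∘ₗ counit (R := k) (A := C))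
    (hvee_counit : vee ∘ₗ comul (R := k) (A := C)
        = (Algebra.linearMap k K) ∘ₗ counit (R := k) (A := C))
    (hwedgevee : ∀ c d e : C, actR (c ⊗ₜ wedge (d ⊗ₜ e)) = actL (vee (c ⊗ₜ d) ⊗ₜ e))
    (hwedgeH : ∀ (c d : C) (h : H), wedge (c ⊗ₜ actR (d ⊗ₜ h)) = wedge (c ⊗ₜ d) * h)
    -- `M` is a right `C`-comodule, a left `A`-module, and a YD module
    (hρcoassoc : (TensorProduct.assoc k M C C).toLinearMap ∘ₗ
        (LinearMap.rTensor C ρ) ∘ₗ ρ = (LinearMap.lTensor M (comul (R := k) (A := C))) ∘ₗ ρ)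
    (hρcounit : (TensorProduct.rid k M).toLinearMap ∘ₗ
        (LinearMap.lTensor M (counit (R := k) (A := C))) ∘ₗ ρ = LinearMap.id)
    (V : Type) [AddCommGroup V] [Module k V] [Module H V] [IsScalarTower k H V]
    [SMulCommClass k H V] :
    ∃ β' : (M ⊗[k] ((C ⊗[k] V) ⧸ balancer H C actR V)) →ₗ[k] V ⊗[k] M,
      -- `β'` is induced by `m ⊗ (c ⊗ v) ↦ (m₍₁₎ ∧ c)·v ⊗ m₍₀₎`
      β' ∘ₗ (LinearMap.lTensor M (balancer H C actR V).mkQ)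
        = (TensorProduct.comm k M V).toLinearMap ∘ₗ
          (LinearMap.lTensor M (hAct H V)) ∘ₗ
          (LinearMap.lTensor M (LinearMap.rTensor V wedge)) ∘ₗ
          (LinearMap.lTensor M (TensorProduct.assoc k C C V).symm.toLinearMap) ∘ₗ
          (TensorProduct.assoc k M C (C ⊗[k] V)).toLinearMap ∘ₗ
          (LinearMap.rTensor (C ⊗[k] V) ρ) ∧
      -- `β'` is a two-sided inverse for `β_{V,M}`
      β' ∘ₗ ((LinearMap.lTensor M (balancer H C actR V).mkQ) ∘ₗ betaRaw ρ V)
        = LinearMap.id ∧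
      ((LinearMap.lTensor M (balancer H C actR V).mkQ) ∘ₗ betaRaw ρ V) ∘ₗ β'
        = LinearMap.id := by
  obtain ⟨β', hβ'⟩ := exists_comp_lTensor_mkQ_eq (balancer H C actR V) (halfBraidInvRaw ρ wedge V)
    fun x hx m => halfBraidInvRaw_eq_zero_of_mem_balancer hwedgeH m hx
  refine ⟨β', hβ', ?_, ?_⟩
  · rw [← LinearMap.comp_assoc, hβ', halfBraidInvRaw_comp_betaRaw hwedge_counit hρcoassoc hρcounit]
  · rw [← LinearMap.cancel_right (LinearMap.lTensor_surjective M (Submodule.mkQ_surjective _)),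
      LinearMap.comp_assoc, hβ', LinearMap.id_comp, LinearMap.comp_assoc]
    exact lTensor_mkQ_comp_betaRaw_comp_halfBraidInvRaw hwedge_counit hvee_counit hwedgevee
      hρcoassoc hρcounit
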